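/- arXiv:2201.00389 — 4 statements merged into one kernel-verified Lean document; each statement's English description precedes it below -/
import Mathlib

section
/- Let F be a field with char F ≠ 2, let G be a finite connected simple graph, and let e be an edge of G with endpoints a and b. Then there exists u : V(G) → F with u² = e (that is, λ_e(u) = 1 and λ_f(u) = 0 for every edge f ≠ e) if and only if one of the following holds: (1) e lies on a cycle of odd length in G and the graph obtained from G by deleting the edge e is bipartite; or (2) e lies on no cycle of G (e is a bridge) and at least one of the two connected components of G minus e is bipartite. -/
/-- `edgeVal u e` is the sum of the values of `u` at the two endpoints of `e`,
written `λ_e(u)` in the paper. -/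
def edgeVal {V F : Type*} [Field F] (u : V → F) : Sym2 V → F :=
  Sym2.lift ⟨fun x y => u x + u y, fun _ _ => add_comm _ _⟩

open SimpleGraph

private lemma fin2_aux : ∀ a b c : Fin 2, a ≠ b → (a = c ∧ b ≠ c) ∨ (a ≠ c ∧ b = c) := by
  decide

private lemma fin2_aux' : ∀ a b c : Fin 2, a ≠ b → (¬ b = c ↔ a = c) := by decide

private lemma sign_walk {V F : Type*} [Field F] {H : SimpleGraph V} {u : V → F}
    (hu : ∀ ⦃x y⦄, H.Adj x y → u x + u y = 0) {x y : V} (w : H.Walk x y) :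
    u y = (-1 : F) ^ w.length * u x := by
  induction w with
  | nil => simp
  | cons h p ih =>
    have hz := eq_neg_of_add_eq_zero_right (hu h)
    rw [ih, hz, Walk.length_cons, pow_succ]
    ring

private lemma color_walk {V : Type*} {H : SimpleGraph V} {c : V → Fin 2}
    (hc : ∀ ⦃x y⦄, H.Adj x y → c x ≠ c y) {x y : V} (w : H.Walk x y) :
    Even w.length ↔ c x = c y := by
  induction w with
  | nil => simp
  | cons h p ih =>
    rw [Walk.length_cons, Nat.even_add_one, ih]
    exact fin2_aux' _ _ _ (hc h)

private lemma reach_delete {V : Type*} (G : SimpleGraph V) (a b : V)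
    (hr : (G.deleteEdges {s(a, b)}).Reachable a b) {x y : V} (w : G.Walk x y) :
    (G.deleteEdges {s(a, b)}).Reachable x y := by
  induction w with
  | nil => exact Reachable.refl _
  | cons h p ih =>
    refine Reachable.trans ?_ ih
    rename_i x' z' y'
    by_cases he : s(x', z') = s(a, b)
    · rw [Sym2.eq_iff] at he
      rcases he with ⟨rfl, rfl⟩ | ⟨rfl, rfl⟩
      · exact hr
      · exact hr.symm
    · exact (SimpleGraph.deleteEdges_adj.mpr ⟨h, by simp [he]⟩).reachable

private lemma colorable_of_signs {V F : Type*} [Field F] (h2 : (2 : F) ≠ 0)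
    {H : SimpleGraph V} {u : V → F}
    (hE : ∀ ⦃x y⦄, H.Adj x y → u x + u y = 0) {c : F} (hc : c ≠ 0)
    (htwo : ∀ v, u v = c ∨ u v = -c) : H.Colorable 2 := by
  classical
  have hnc : -c ≠ c := by
    intro h
    apply hc
    have h' : (2 : F) * c = 0 := by linear_combination -h
    exact (mul_eq_zero.mp h').resolve_left h2
  have h2c : ¬ (c + c = 0) := by
    intro h; exact hc ((mul_eq_zero.mp (by linear_combination h : (2:F) * c = 0)).resolve_left h2)
  refine ⟨Coloring.mk (fun v => if u v = c then 0 else 1) ?_⟩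
  intro x y h
  have hxy := hE h
  rcases htwo x with hx | hx <;> rcases htwo y with hy | hy
  · exact absurd (by rw [hx, hy] at hxy; exact hxy) h2c
  · simp [hx, hy, hnc]
  · simp [hx, hy, hnc]
  · exact absurd (by rw [hx, hy] at hxy; linear_combination -hxy) h2c

theorem edge_is_square_iff
    {V F : Type*} [Fintype V] [DecidableEq V] [Field F]
    (hchar2 : ringChar F ≠ 2)
    (G : SimpleGraph V) [DecidableRel G.Adj] (hconn : G.Connected)
    (a b : V) (hab : G.Adj a b) :
    (∃ u : V → F, edgeVal u s(a, b) = 1 ∧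
        ∀ f ∈ G.edgeSet, f ≠ s(a, b) → edgeVal u f = 0) ↔
      ((∃ (v : V) (w : G.Walk v v), w.IsCycle ∧ s(a, b) ∈ w.edges ∧ Odd w.length) ∧
          (G.deleteEdges {s(a, b)}).Colorable 2) ∨
        ((¬ ∃ (v : V) (w : G.Walk v v), w.IsCycle ∧ s(a, b) ∈ w.edges) ∧
          (((G.deleteEdges {s(a, b)}).induce
              {v : V | (G.deleteEdges {s(a, b)}).Reachable a v}).Colorable 2 ∨
            ((G.deleteEdges {s(a, b)}).induce
              {v : V | (G.deleteEdges {s(a, b)}).Reachable b v}).Colorable 2)) := by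
  classical
  set G' := G.deleteEdges {s(a, b)} with hG'def
  have h2 : (2 : F) ≠ 0 := Ring.two_ne_zero hchar2
  have hcyc_iff : (∃ (v : V) (w : G.Walk v v), w.IsCycle ∧ s(a, b) ∈ w.edges) ↔
      G'.Reachable a b := by
    constructor
    · intro h
      exact (adj_and_reachable_delete_edges_iff_exists_cycle.mpr h).2
    · intro h
      exact adj_and_reachable_delete_edges_iff_exists_cycle.mp ⟨hab, h⟩
  constructor
  · rintro ⟨u, hu1, hu2⟩
    have hE : ∀ ⦃x y⦄, G'.Adj x y → u x + u y = 0 := by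
      intro x y h
      rw [hG'def, SimpleGraph.deleteEdges_adj] at h
      have := hu2 s(x, y) ((G.mem_edgeSet).mpr h.1) (by simpa using h.2)
      simpa [edgeVal] using this
    have hab1 : u a + u b = 1 := by simpa [edgeVal] using hu1
    by_cases hr : G'.Reachable a b
    · left
      have hreach : ∀ v, G'.Reachable a v := fun v =>
        reach_delete G a b hr ((hconn.preconnected a v).some)
      have hua : u a ≠ 0 := by
        intro h0
        obtain ⟨w⟩ := hr
        have hb0 := sign_walk hE w
        rw [h0, mul_zero] at hb0
        rw [h0, hb0] at hab1
        simpa using hab1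
      have htwo : ∀ v, u v = u a ∨ u v = -u a := by
        intro v
        obtain ⟨w⟩ := hreach v
        have hs := sign_walk hE w
        rcases Nat.even_or_odd w.length with he | ho
        · left; rw [hs, he.neg_one_pow, one_mul]
        · right; rw [hs, ho.neg_one_pow, neg_one_mul]
      refine ⟨?_, colorable_of_signs h2 hE hua htwo⟩
      obtain ⟨q⟩ := hr
      set p := q.reverse.bypass with hpdef
      have hpath : p.IsPath := Walk.bypass_isPath _
      have hsub : ∀ f ∈ p.edges, f ∈ G.edgeSet := fun f hf =>
        edgeSet_mono (G.deleteEdges_le _) (p.edges_subset_edgeSet hf)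
      have hplen : Even p.length := by
        have hs := sign_walk hE p
        rcases Nat.even_or_odd p.length with he | ho
        · exact he
        · exfalso
          rw [ho.neg_one_pow, neg_one_mul] at hs
          rw [hs] at hab1
          simp at hab1
      refine ⟨a, Walk.cons hab (p.transfer G hsub), ?_, ?_, ?_⟩
      · rw [Walk.cons_isCycle_iff]
        refine ⟨hpath.transfer _, ?_⟩
        rw [Walk.edges_transfer]
        intro hmem
        have hmem' := p.edges_subset_edgeSet hmem
        rw [hG'def, edgeSet_deleteEdges] at hmem'
        simp at hmem'
      · simp
      · rw [Walk.length_cons, Walk.length_transfer]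
        exact hplen.add_one
    · right
      refine ⟨fun h => hr (hcyc_iff.mp h), ?_⟩
      have key : ∀ r : V, u r ≠ 0 →
          ((G'.induce {v : V | G'.Reachable r v}).Colorable 2) := by
        intro r hur
        have hE' : ∀ ⦃x y : {v : V | G'.Reachable r v}⦄,
            (G'.induce {v : V | G'.Reachable r v}).Adj x y → u x.1 + u y.1 = 0 := by
          intro x y h
          exact hE (by simpa using h)
        have htwo : ∀ v : {v : V | G'.Reachable r v}, u v.1 = u r ∨ u v.1 = -u r := by
          rintro ⟨v, hv⟩
          obtain ⟨w⟩ := (hv : G'.Reachable r v)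
          have hs := sign_walk hE w
          rcases Nat.even_or_odd w.length with he | ho
          · left; rw [hs, he.neg_one_pow, one_mul]
          · right; rw [hs, ho.neg_one_pow, neg_one_mul]
        exact colorable_of_signs h2 hE' hur htwo
      by_cases hua : u a = 0
      · right
        have hub : u b ≠ 0 := by
          intro h
          rw [hua, h] at hab1
          simpa using hab1
        exact key b hub
      · left
        exact key a hua
  · rintro (⟨⟨v, w, hcyc, hmem, hodd⟩, hcol⟩ | ⟨hnocyc, hcol⟩)
    · obtain ⟨C⟩ := hcol
      have hvalid : ∀ ⦃x y⦄, G'.Adj x y → C x ≠ C y := fun x y h => C.valid h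
      have hCab : C a = C b := by
        by_contra hne
        have hG : ∀ ⦃x y⦄, G.Adj x y → C x ≠ C y := by
          intro x y h
          by_cases he : s(x, y) = s(a, b)
          · rw [Sym2.eq_iff] at he
            rcases he with ⟨rfl, rfl⟩ | ⟨rfl, rfl⟩
            · exact hne
            · exact fun h' => hne h'.symm
          · exact hvalid (SimpleGraph.deleteEdges_adj.mpr ⟨h, by simpa using he⟩)
        have heven := (color_walk hG w).mpr rfl
        exact (Nat.not_odd_iff_even.mpr heven) hodd
      refine ⟨fun v => if C v = C a then (2 : F)⁻¹ else -(2 : F)⁻¹, ?_, ?_⟩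
      · have h1 : (if C a = C a then (2 : F)⁻¹ else -(2 : F)⁻¹) = (2 : F)⁻¹ := if_pos rfl
        have hb1 : (if C b = C a then (2 : F)⁻¹ else -(2 : F)⁻¹) = (2 : F)⁻¹ :=
          if_pos hCab.symm
        show (if C a = C a then (2 : F)⁻¹ else -(2 : F)⁻¹) +
            (if C b = C a then (2 : F)⁻¹ else -(2 : F)⁻¹) = 1
        rw [h1, hb1, ← two_mul, mul_inv_cancel₀ h2]
      · intro f hf hfe
        revert hf hfe
        refine Sym2.ind (fun x y => ?_) f
        intro hf hfe
        have hadj : G'.Adj x y :=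
          SimpleGraph.deleteEdges_adj.mpr ⟨(G.mem_edgeSet).mp hf, by simpa using hfe⟩
        rcases fin2_aux (C x) (C y) (C a) (hvalid hadj) with ⟨h1, h2'⟩ | ⟨h1, h2'⟩ <;>
          · show (if C x = C a then (2 : F)⁻¹ else -(2 : F)⁻¹) +
                (if C y = C a then (2 : F)⁻¹ else -(2 : F)⁻¹) = 0
            simp [h1, h2']
    · have hnr : ¬ G'.Reachable a b := fun h => hnocyc (hcyc_iff.mpr h)
      rcases hcol with hca | hcb
      · -- a-side colorable
        obtain ⟨C⟩ := hca
        refine ⟨fun v => if h : G'.Reachable a v then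
            (if C ⟨v, h⟩ = C ⟨a, Reachable.refl a⟩ then 1 else -1) else 0, ?_, ?_⟩
        · show (if h : G'.Reachable a a then
              (if C ⟨a, h⟩ = C ⟨a, Reachable.refl a⟩ then (1:F) else -1) else 0) +
            (if h : G'.Reachable a b then
              (if C ⟨b, h⟩ = C ⟨a, Reachable.refl a⟩ then (1:F) else -1) else 0) = 1
          rw [dif_pos (Reachable.refl a), dif_neg hnr, if_pos rfl]
          simp
        · intro f hf hfe
          revert hf hfe
          refine Sym2.ind (fun x y => ?_) f
          intro hf hfe
          have hadj : G'.Adj x y :=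
            SimpleGraph.deleteEdges_adj.mpr ⟨(G.mem_edgeSet).mp hf, by simpa using hfe⟩
          show (if h : G'.Reachable a x then
                (if C ⟨x, h⟩ = C ⟨a, Reachable.refl a⟩ then (1:F) else -1) else 0) +
              (if h : G'.Reachable a y then
                (if C ⟨y, h⟩ = C ⟨a, Reachable.refl a⟩ then (1:F) else -1) else 0) = 0
          by_cases hx : G'.Reachable a x
          · have hy : G'.Reachable a y := hx.trans hadj.reachable
            have hCxy : C ⟨x, hx⟩ ≠ C ⟨y, hy⟩ := C.valid (by simpa using hadj)
            rw [dif_pos hx, dif_pos hy]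
            rcases fin2_aux _ _ (C ⟨a, Reachable.refl a⟩) hCxy with ⟨h1, h2'⟩ | ⟨h1, h2'⟩
            · rw [if_pos h1, if_neg h2']; ring
            · rw [if_neg h1, if_pos h2']; ring
          · have hy : ¬ G'.Reachable a y := fun h => hx (h.trans hadj.symm.reachable)
            rw [dif_neg hx, dif_neg hy, add_zero]
      · -- b-side colorable
        obtain ⟨C⟩ := hcb
        have hnr' : ¬ G'.Reachable b a := fun h => hnr h.symm
        refine ⟨fun v => if h : G'.Reachable b v then
            (if C ⟨v, h⟩ = C ⟨b, Reachable.refl b⟩ then 1 else -1) else 0, ?_, ?_⟩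
        · show (if h : G'.Reachable b a then
              (if C ⟨a, h⟩ = C ⟨b, Reachable.refl b⟩ then (1:F) else -1) else 0) +
            (if h : G'.Reachable b b then
              (if C ⟨b, h⟩ = C ⟨b, Reachable.refl b⟩ then (1:F) else -1) else 0) = 1
          rw [dif_pos (Reachable.refl b), dif_neg hnr', if_pos rfl]
          simp
        · intro f hf hfe
          revert hf hfe
          refine Sym2.ind (fun x y => ?_) f
          intro hf hfe
          have hadj : G'.Adj x y :=
            SimpleGraph.deleteEdges_adj.mpr ⟨(G.mem_edgeSet).mp hf, by simpa using hfe⟩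
          show (if h : G'.Reachable b x then
                (if C ⟨x, h⟩ = C ⟨b, Reachable.refl b⟩ then (1:F) else -1) else 0) +
              (if h : G'.Reachable b y then
                (if C ⟨y, h⟩ = C ⟨b, Reachable.refl b⟩ then (1:F) else -1) else 0) = 0
          by_cases hx : G'.Reachable b x
          · have hy : G'.Reachable b y := hx.trans hadj.reachable
            have hCxy : C ⟨x, hx⟩ ≠ C ⟨y, hy⟩ := C.valid (by simpa using hadj)
            rw [dif_pos hx, dif_pos hy]
            rcases fin2_aux _ _ (C ⟨b, Reachable.refl b⟩) hCxy with ⟨h1, h2'⟩ | ⟨h1, h2'⟩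
            · rw [if_pos h1, if_neg h2']; ring
            · rw [if_neg h1, if_pos h2']; ring
          · have hy : ¬ G'.Reachable b y := fun h => hx (h.trans hadj.symm.reachable)
            rw [dif_neg hx, dif_neg hy, add_zero]
end

section
/- Let F be a field of characteristic 0 and let G be a connected finite simple graph of order p and size q that is edge-square over F. Then either q = p − 1 and G is a tree, or q = p and G contains exactly one cycle, which has odd length. -/
/-- `G` is edge-square over `F`: every edge is exactly the support of a square `u²`. -/
def EdgeSquare {V : Type*} (F : Type*) [Field F] (G : SimpleGraph V) : Prop :=
  ∀ e ∈ G.edgeSet, ∃ u : V → F,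
    {f : Sym2 V | f ∈ G.edgeSet ∧ edgeVal u f ≠ 0} = {e}

/-- `G` contains exactly one cycle (all cycles have the same edge set) and that
cycle has odd length. -/
def UnicyclicOdd {V : Type*} (G : SimpleGraph V) : Prop :=
  (∃ (v : V) (w : G.Walk v v), w.IsCycle) ∧
    (∀ (v : V) (w : G.Walk v v), w.IsCycle → Odd w.length) ∧
    (∀ (v₁ v₂ : V) (w₁ : G.Walk v₁ v₁) (w₂ : G.Walk v₂ v₂),
      w₁.IsCycle → w₂.IsCycle → {e | e ∈ w₁.edges} = {e | e ∈ w₂.edges})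

namespace EdgeSquareAux

open SimpleGraph Module

variable {V F : Type*} [Field F]

@[simp] lemma edgeVal_mk (u : V → F) (x y : V) : edgeVal u s(x, y) = u x + u y := rfl

/-- Alternating sum of `edgeVal`s along a walk. -/
def altSum {G : SimpleGraph V} (u : V → F) : ∀ {x y : V}, G.Walk x y → F
  | x, _, SimpleGraph.Walk.cons (v := z) _ w => (u x + u z) - altSum u w
  | _, _, SimpleGraph.Walk.nil => 0

lemma altSum_eq {G : SimpleGraph V} (u : V → F) {x y : V} (w : G.Walk x y) :
    altSum u w = u x - (-1 : F) ^ w.length * u y := by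
  induction w with
  | nil => simp [altSum]
  | cons h w ih =>
    rw [altSum, ih, SimpleGraph.Walk.length_cons, pow_succ]
    ring

lemma altSum_eq_zero {G : SimpleGraph V} (u : V → F) {x y : V} (w : G.Walk x y)
    (h : ∀ f ∈ w.edges, edgeVal u f = 0) : altSum u w = 0 := by
  induction w with
  | nil => rfl
  | @cons a b c h' w ih =>
    rw [altSum]
    have h1 : edgeVal u s(a, b) = 0 := h s(a, b) (by simp)
    rw [edgeVal_mk] at h1
    rw [h1, ih (fun f hf => h f (by simp [hf]))]
    ring

lemma ker_walk {G : SimpleGraph V} (u : V → F) (h : ∀ a b, G.Adj a b → u a + u b = 0)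
    {x y : V} (w : G.Walk x y) : u y = (-1 : F) ^ w.length * u x := by
  induction w with
  | nil => simp
  | @cons a b c h' w ih =>
    have hz := h _ _ h'
    rw [ih, SimpleGraph.Walk.length_cons, pow_succ]
    have hb : u b = - u a := by linear_combination hz
    rw [hb]; ring

/-- Every cycle in an edge-square graph (char 0) is odd. -/
lemma cycles_odd [CharZero F] (G : SimpleGraph V) (hes : EdgeSquare F G)
    {v : V} (c : G.Walk v v) (hc : c.IsCycle) : Odd c.length := by
  rw [← Nat.not_even_iff_odd]
  intro hev
  cases c with
  | nil => exact hc.ne_nil rfl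
  | @cons _ z _ h w =>
    obtain ⟨u, hu⟩ := hes s(v, z) h
    have he1 : edgeVal u s(v, z) ≠ 0 := ((Set.ext_iff.mp hu s(v, z)).mpr rfl).2
    have hnodup := hc.edges_nodup
    rw [SimpleGraph.Walk.edges_cons, List.nodup_cons] at hnodup
    have hrest : ∀ f ∈ w.edges, edgeVal u f = 0 := by
      intro f hf
      by_contra hne
      have hfe : f ∈ ({s(v, z)} : Set (Sym2 V)) := by
        rw [← hu]; exact ⟨w.edges_subset_edgeSet hf, hne⟩
      rw [Set.mem_singleton_iff] at hfe
      exact hnodup.1 (hfe ▸ hf)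
    have h0 : altSum u (SimpleGraph.Walk.cons h w) = u v + u z := by
      rw [altSum, altSum_eq_zero u w hrest]; ring
    have h1 := altSum_eq u (SimpleGraph.Walk.cons h w)
    rw [h0, Even.neg_one_pow hev, one_mul] at h1
    apply he1
    rw [edgeVal_mk, h1]
    ring

/-- Rank–nullity setup: if each member of a finite set of potential edges has a
function supported (among members) exactly on it, then
`card + dim of common kernel = card V`. -/
lemma key [Fintype V] (E : Finset (Sym2 V))
    (hE : ∀ e ∈ E, ∃ u : V → F, edgeVal u e ≠ 0 ∧ ∀ f ∈ E, f ≠ e → edgeVal u f = 0) :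
    ∃ K : Submodule F (V → F), (∀ u, u ∈ K ↔ ∀ f ∈ E, edgeVal u f = 0)
      ∧ E.card + Module.finrank F K = Fintype.card V := by
  classical
  have hadd : ∀ (u v : V → F) (f : Sym2 V), edgeVal (u + v) f = edgeVal u f + edgeVal v f := by
    intro u v f
    induction f using Sym2.ind with
    | _ x y => simp only [edgeVal_mk, Pi.add_apply]; ring
  have hsmul : ∀ (c : F) (u : V → F) (f : Sym2 V), edgeVal (c • u) f = c * edgeVal u f := by
    intro c u f
    induction f using Sym2.ind with
    | _ x y => simp only [edgeVal_mk, Pi.smul_apply, smul_eq_mul]; ring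
  let Φ : (V → F) →ₗ[F] ({f : Sym2 V // f ∈ E} → F) :=
    { toFun := fun u e => edgeVal u e.1
      map_add' := fun u v => funext fun e => hadd u v e.1
      map_smul' := fun c u => funext fun e => hsmul c u e.1 }
  have hΦ : ∀ (u : V → F) (e : E), Φ u e = edgeVal u e.1 := fun _ _ => rfl
  have hsurj : Function.Surjective Φ := by
    intro y
    choose U hU1 hU2 using fun e : E => hE e.1 e.2
    refine ⟨∑ f : E, (y f / edgeVal (U f) f.1) • U f, ?_⟩
    funext g
    rw [map_sum]
    rw [Finset.sum_apply]
    rw [Finset.sum_eq_single g]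
    · rw [map_smul]
      show (y g / edgeVal (U g) g.1) * Φ (U g) g = y g
      rw [hΦ]
      exact div_mul_cancel₀ (y g) (hU1 g)
    · intro f _ hfg
      rw [map_smul]
      show (y f / edgeVal (U f) f.1) * Φ (U f) g = 0
      rw [hΦ, hU2 f g.1 g.2 (fun hh => hfg (Subtype.ext hh.symm)), mul_zero]
    · intro hg; exact absurd (Finset.mem_univ g) hg
  refine ⟨LinearMap.ker Φ, ?_, ?_⟩
  · intro u
    constructor
    · intro hu f hf
      have := congrFun (LinearMap.mem_ker.mp hu) ⟨f, hf⟩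
      rw [hΦ] at this
      simpa using this
    · intro h
      exact LinearMap.mem_ker.mpr (funext fun e => by rw [hΦ, h e.1 e.2]; rfl)
  · have h1 := LinearMap.finrank_range_add_finrank_ker Φ
    rw [LinearMap.range_eq_top.mpr hsurj, finrank_top, Module.finrank_pi,
      Module.finrank_pi, Fintype.card_coe] at h1
    exact h1

lemma reach_del {G : SimpleGraph V} {e : Sym2 V}
    (hr : ∀ a b, s(a, b) = e → (G \ SimpleGraph.fromEdgeSet {e}).Reachable a b)
    {x y : V} (w : G.Walk x y) : (G \ SimpleGraph.fromEdgeSet {e}).Reachable x y := by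
  induction w with
  | nil => exact SimpleGraph.Reachable.refl _
  | @cons a b _ h w ih =>
    refine SimpleGraph.Reachable.trans ?_ ih
    by_cases hc : s(a, b) = e
    · exact hr a b hc
    · refine SimpleGraph.Adj.reachable ?_
      rw [SimpleGraph.sdiff_adj, SimpleGraph.fromEdgeSet_adj]
      exact ⟨h, fun hh => hc (Set.mem_singleton_iff.mp hh.1)⟩

end EdgeSquareAux

open EdgeSquareAux SimpleGraph Module

theorem connected_edge_square_classification
    {V F : Type*} [Fintype V] [DecidableEq V] [Field F] [CharZero F]
    (G : SimpleGraph V) [DecidableRel G.Adj]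
    (hconn : G.Connected) (hes : EdgeSquare F G) :
    (G.edgeFinset.card = Fintype.card V - 1 ∧ G.IsTree) ∨
      (G.edgeFinset.card = Fintype.card V ∧ UnicyclicOdd G) := by
  classical
  have hV : Nonempty V := hconn.nonempty
  have hPv : 0 < Fintype.card V := Fintype.card_pos
  have hE : ∀ e ∈ G.edgeFinset, ∃ u : V → F, edgeVal u e ≠ 0 ∧
      ∀ f ∈ G.edgeFinset, f ≠ e → edgeVal u f = 0 := by
    intro e he
    rw [mem_edgeFinset] at he
    obtain ⟨u, hu⟩ := hes e he
    refine ⟨u, ((Set.ext_iff.mp hu e).mpr rfl).2, fun f hf hfe => ?_⟩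
    by_contra hne
    apply hfe
    have : f ∈ ({e} : Set (Sym2 V)) := by
      rw [← hu]; exact ⟨mem_edgeFinset.mp hf, hne⟩
    simpa using this
  obtain ⟨K, hKmem, hKcard⟩ := key G.edgeFinset hE
  by_cases hodd : ∃ (v : V) (w : G.Walk v v), Odd w.length
  · -- not bipartite: the unicyclic case
    right
    obtain ⟨v0, w0, hw0⟩ := hodd
    have hKbot : K = ⊥ := by
      rw [Submodule.eq_bot_iff]
      intro u hu
      rw [hKmem] at hu
      have hadj : ∀ a b, G.Adj a b → u a + u b = 0 := by
        intro a b hab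
        have := hu s(a, b) (by rw [mem_edgeFinset]; exact hab)
        rwa [edgeVal_mk] at this
      have h0 : u v0 = 0 := by
        have h1 := ker_walk u hadj w0
        rw [Odd.neg_one_pow hw0] at h1
        have h2 : (2 : F) * u v0 = 0 := by linear_combination h1
        rcases mul_eq_zero.mp h2 with h | h
        · exact absurd h two_ne_zero
        · exact h
      funext x
      obtain ⟨w⟩ := hconn v0 x
      have := ker_walk u hadj w
      rw [h0, mul_zero] at this
      simpa using this
    rw [hKbot, finrank_bot] at hKcard
    have hq : G.edgeFinset.card = Fintype.card V := by omega
    refine ⟨hq, ?_, fun v c hc => cycles_odd G hes c hc, ?_⟩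
    · by_contra hnone
      push_neg at hnone
      have htree : G.IsTree := ⟨hconn, fun v c hc => hnone v c hc⟩
      have := htree.card_edgeFinset
      omega
    · suffices hsub : ∀ (v₁ v₂ : V) (c₁ : G.Walk v₁ v₁) (c₂ : G.Walk v₂ v₂),
          c₁.IsCycle → c₂.IsCycle → ∀ e ∈ c₁.edges, e ∈ c₂.edges by
        intro v₁ v₂ c₁ c₂ h1 h2
        ext e
        exact ⟨fun he => hsub _ _ _ _ h1 h2 e he, fun he => hsub _ _ _ _ h2 h1 e he⟩
      intro v₁ v₂ c₁ c₂ h1 h2 e he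
      by_contra hne
      have heE : e ∈ G.edgeFinset := mem_edgeFinset.mpr (c₁.edges_subset_edgeSet he)
      have hE' : ∀ f ∈ G.edgeFinset.erase e, ∃ u : V → F, edgeVal u f ≠ 0 ∧
          ∀ g ∈ G.edgeFinset.erase e, g ≠ f → edgeVal u g = 0 := by
        intro f hf
        obtain ⟨u, hu1, hu2⟩ := hE f (Finset.mem_of_mem_erase hf)
        exact ⟨u, hu1, fun g hg => hu2 g (Finset.mem_of_mem_erase hg)⟩
      obtain ⟨K', hK'mem, hK'card⟩ := key (G.edgeFinset.erase e) hE'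
      rw [Finset.card_erase_of_mem heE] at hK'card
      have hq1 : 1 ≤ G.edgeFinset.card := Finset.card_pos.mpr ⟨e, heE⟩
      have hpos : 0 < Module.finrank F K' := by omega
      obtain ⟨u', hu'⟩ := Module.finrank_pos_iff_exists_ne_zero.mp hpos
      set u : V → F := u'.1 with hudef
      have huK : ∀ f ∈ G.edgeFinset.erase e, edgeVal u f = 0 := (hK'mem u).mp u'.2
      have hu0 : u ≠ 0 := fun h => hu' (Subtype.ext h)
      have hc2edges : ∀ f ∈ c₂.edges, edgeVal u f = 0 := by
        intro f hf
        refine huK f (Finset.mem_erase.mpr ⟨fun hfe => hne (hfe ▸ hf), ?_⟩)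
        exact mem_edgeFinset.mpr (c₂.edges_subset_edgeSet hf)
      have halt := altSum_eq_zero u c₂ hc2edges
      rw [altSum_eq, Odd.neg_one_pow (cycles_odd G hes c₂ h2)] at halt
      have hv2 : u v₂ = 0 := by
        have h2' : (2 : F) * u v₂ = 0 := by linear_combination halt
        have := mul_eq_zero.mp h2'
        simpa [(two_ne_zero : (2 : F) ≠ 0)] using this
      have key2 : ∀ a b, s(a, b) = e → (G \ fromEdgeSet {e}).Reachable a b := by
        intro a b hab
        subst hab
        exact (adj_and_reachable_delete_edges_iff_exists_cycle.mpr ⟨v₁, c₁, h1, he⟩).2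
      have hadj' : ∀ a b, (G \ fromEdgeSet {e}).Adj a b → u a + u b = 0 := by
        intro a b hab
        rw [sdiff_adj, fromEdgeSet_adj] at hab
        have hne2 : s(a, b) ≠ e := fun hh => hab.2 ⟨hh, hab.1.ne⟩
        have := huK s(a, b) (Finset.mem_erase.mpr ⟨hne2, mem_edgeFinset.mpr hab.1⟩)
        rwa [edgeVal_mk] at this
      have : u = 0 := by
        funext x
        obtain ⟨w⟩ := hconn v₂ x
        have := ker_walk u hadj' (reach_del key2 w).some
        rw [hv2, mul_zero] at this
        simpa using this
      exact hu0 this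
  · -- bipartite: the tree case
    left
    obtain ⟨r⟩ := hV
    push_neg at hodd
    set k : V → F := fun v => (-1 : F) ^ (G.dist r v) with hk
    have hker : ∀ a b, G.Adj a b → k a + k b = 0 := by
      intro a b hab
      obtain ⟨wa, hwa⟩ := (hconn r a).exists_walk_length_eq_dist
      obtain ⟨wb, hwb⟩ := (hconn r b).exists_walk_length_eq_dist
      have hcw := hodd r (wa.append (SimpleGraph.Walk.cons hab wb.reverse))
      rw [SimpleGraph.Walk.length_append, SimpleGraph.Walk.length_cons,
        SimpleGraph.Walk.length_reverse, hwa, hwb] at hcw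
      rw [← Nat.not_even_iff_odd, not_not] at hcw
      have hoddsum : Odd (G.dist r a + G.dist r b) := by
        rcases Nat.even_or_odd (G.dist r a + G.dist r b) with h | h
        · exfalso
          rw [Nat.even_iff] at hcw h
          omega
        · exact h
      rcases Nat.even_or_odd (G.dist r a) with h | h
      · have hb : Odd (G.dist r b) := by
          rw [Nat.even_iff] at h; rw [Nat.odd_iff] at hoddsum ⊢; omega
        simp only [hk]
        rw [Even.neg_one_pow h, Odd.neg_one_pow hb]
        ring
      · have hb : Even (G.dist r b) := by
          rw [Nat.odd_iff] at h hoddsum; rw [Nat.even_iff]; omega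
        simp only [hk]
        rw [Odd.neg_one_pow h, Even.neg_one_pow hb]
        ring
    have hkK : k ∈ K := by
      rw [hKmem]
      intro f hf
      induction f using Sym2.ind with
      | _ a b =>
        rw [edgeVal_mk]
        exact hker a b (mem_edgeFinset.mp hf)
    have hKeq : K = Submodule.span F {k} := by
      apply le_antisymm
      · intro u hu
        rw [hKmem] at hu
        have hadj : ∀ a b, G.Adj a b → u a + u b = 0 := by
          intro a b hab
          have := hu s(a, b) (by rw [mem_edgeFinset]; exact hab)
          rwa [edgeVal_mk] at this
        rw [Submodule.mem_span_singleton]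
        refine ⟨u r, funext fun v => ?_⟩
        obtain ⟨w, hw⟩ := (hconn r v).exists_walk_length_eq_dist
        have := ker_walk u hadj w
        rw [hw] at this
        simp only [hk, Pi.smul_apply, smul_eq_mul]
        rw [this]; ring
      · rw [Submodule.span_le, Set.singleton_subset_iff]
        exact hkK
    have hk0 : k ≠ 0 := by
      intro h0
      have := congrFun h0 r
      simp only [hk, SimpleGraph.dist_self, pow_zero, Pi.zero_apply] at this
      exact one_ne_zero this
    rw [hKeq, finrank_span_singleton hk0] at hKcard
    refine ⟨by omega, hconn, fun v c hc => ?_⟩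
    exact hodd v c (cycles_odd G hes c hc)
end

section
/- Let F be a field with char F ≠ 2. Any two trees with the same number of vertices have normally isomorphic normal graph algebras over F: there is an F-linear equivalence between the two algebras that preserves the product, maps the vertex-span subspace onto the vertex-span subspace, and maps the edge-span subspace onto the edge-span subspace. -/
/-- The product of the normal graph algebra `N G = U_G × Z_G` over `F`. -/
def nmul {V F : Type*} [Field F] (G : SimpleGraph V)
    (a b : (V → F) × (G.edgeSet → F)) : (V → F) × (G.edgeSet → F) :=
  (0, fun e => edgeVal a.1 (e : Sym2 V) * edgeVal b.1 (e : Sym2 V))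

/-!
For a tree `G` with a root `r`, the map `u ↦ (u r, λ(u))` is a linear isomorphism
`U_G ≃ F × Z_G`: it is injective because `λ_e(u) = 0` forces `u` to change sign along every edge,
so `u` vanishes everywhere once it vanishes at `r`, and both sides have dimension `|V| = |E| + 1`.
Hence any bijection `σ` between the edge sets of two trees of the same order can be transported
to a vertex-space isomorphism `A` with `λ(A u) = λ(u) ∘ σ⁻¹`. Since the product of `N G` only sees
`λ`, and reindexing by `σ` is multiplicative, `A × (· ∘ σ⁻¹)` is a normal isomorphism.
-/

namespace SimpleGraph

variable {V V₁ V₂ F : Type*} [Field F]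

def edgeValMap (G : SimpleGraph V) : (V → F) →ₗ[F] (G.edgeSet → F) where
  toFun u e := edgeVal u e
  map_add' u v := by
    funext ⟨e, _⟩
    induction e using Sym2.ind with
    | _ x y => simp only [edgeVal, Sym2.lift_mk, Pi.add_apply]; ring
  map_smul' c u := by
    funext ⟨e, _⟩
    induction e using Sym2.ind with
    | _ x y => simp only [edgeVal, Sym2.lift_mk, Pi.smul_apply, smul_eq_mul, RingHom.id_apply]; ring

@[simp]
lemma edgeValMap_apply (G : SimpleGraph V) (u : V → F) (e : G.edgeSet) :
    edgeValMap G u e = edgeVal u e := rfl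

lemma Connected.eq_zero_of_edgeVal_eq_zero {G : SimpleGraph V} (hG : G.Connected)
    {u : V → F} {r : V} (hr : u r = 0) (hu : ∀ e ∈ G.edgeSet, edgeVal u e = 0) : u = 0 := by
  have propagate : ∀ {v w : V}, G.Walk v w → u v = 0 → u w = 0 := by
    intro v w p
    induction p with
    | nil => exact id
    | cons hadj _ ih =>
      intro hv
      refine ih ?_
      simpa [edgeVal, hv] using hu s(_, _) hadj
  funext v
  exact propagate (hG.preconnected r v).some hr

def evalEdgeValMap (G : SimpleGraph V) (r : V) : (V → F) →ₗ[F] F × (G.edgeSet → F) :=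
  (LinearMap.proj r).prod (edgeValMap G)

lemma Connected.evalEdgeValMap_injective {G : SimpleGraph V} (hG : G.Connected) (r : V) :
    Function.Injective (evalEdgeValMap (F := F) G r) := by
  rw [← LinearMap.ker_eq_bot, LinearMap.ker_eq_bot']
  intro u hu
  refine hG.eq_zero_of_edgeVal_eq_zero (congrArg Prod.fst hu) fun e he => ?_
  exact congrFun (congrArg Prod.snd hu) ⟨e, he⟩

lemma IsTree.finrank_pi_eq_finrank_prod_edgeSet [Finite V] {G : SimpleGraph V} (hG : G.IsTree) :
    Module.finrank F (V → F) = Module.finrank F (F × (G.edgeSet → F)) := by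
  have := Fintype.ofFinite V
  have := Fintype.ofFinite G.edgeSet
  have hcard := (isTree_iff_connected_and_card.mp hG).2
  simp only [Nat.card_eq_fintype_card] at hcard
  simp [Module.finrank_prod, ← hcard, add_comm]

noncomputable def IsTree.evalEdgeValEquiv [Finite V] {G : SimpleGraph V} (hG : G.IsTree)
    (r : V) : (V → F) ≃ₗ[F] F × (G.edgeSet → F) :=
  LinearEquiv.ofInjectiveOfFinrankEq (evalEdgeValMap G r) (hG.connected.evalEdgeValMap_injective r)
    hG.finrank_pi_eq_finrank_prod_edgeSet

lemma IsTree.evalEdgeValEquiv_apply [Finite V] {G : SimpleGraph V} (hG : G.IsTree) (r : V)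
    (u : V → F) : hG.evalEdgeValEquiv r u = (u r, edgeValMap G u) := rfl

noncomputable def IsTree.vertexEquivOfEdgeEquiv [Finite V₁] [Finite V₂]
    {G₁ : SimpleGraph V₁} {G₂ : SimpleGraph V₂} (h₁ : G₁.IsTree) (h₂ : G₂.IsTree)
    (r₁ : V₁) (r₂ : V₂) (σ : G₁.edgeSet ≃ G₂.edgeSet) : (V₁ → F) ≃ₗ[F] (V₂ → F) :=
  (h₁.evalEdgeValEquiv r₁).trans <|
    ((LinearEquiv.refl F F).prodCongr (LinearEquiv.funCongrLeft F F σ.symm)).trans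
      (h₂.evalEdgeValEquiv r₂).symm

lemma IsTree.edgeValMap_vertexEquivOfEdgeEquiv [Finite V₁] [Finite V₂]
    {G₁ : SimpleGraph V₁} {G₂ : SimpleGraph V₂} (h₁ : G₁.IsTree) (h₂ : G₂.IsTree)
    (r₁ : V₁) (r₂ : V₂) (σ : G₁.edgeSet ≃ G₂.edgeSet) (u : V₁ → F) :
    edgeValMap G₂ (h₁.vertexEquivOfEdgeEquiv h₂ r₁ r₂ σ u) =
      LinearEquiv.funCongrLeft F F σ.symm (edgeValMap G₁ u) := by
  have h := (h₂.evalEdgeValEquiv r₂).apply_symm_apply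
    (u r₁, LinearEquiv.funCongrLeft F F σ.symm (edgeValMap G₁ u))
  exact congrArg Prod.snd h

lemma prodCongr_funCongrLeft_map_nmul {G₁ : SimpleGraph V₁} {G₂ : SimpleGraph V₂}
    (A : (V₁ → F) ≃ₗ[F] (V₂ → F)) (σ : G₁.edgeSet ≃ G₂.edgeSet)
    (hA : ∀ u, edgeValMap G₂ (A u) = LinearEquiv.funCongrLeft F F σ.symm (edgeValMap G₁ u))
    (a b : (V₁ → F) × (G₁.edgeSet → F)) :
    A.prodCongr (LinearEquiv.funCongrLeft F F σ.symm) (nmul G₁ a b) =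
      nmul G₂ (A.prodCongr (LinearEquiv.funCongrLeft F F σ.symm) a)
        (A.prodCongr (LinearEquiv.funCongrLeft F F σ.symm) b) := by
  ext e
  · simp [nmul]
  · have ha := congrFun (hA a.1) e
    have hb := congrFun (hA b.1) e
    simp only [edgeValMap_apply] at ha hb
    simp [nmul, ha, hb, LinearMap.funLeft]

end SimpleGraph

theorem trees_same_order_have_isomorphic_normal_algebras_general
    {V₁ V₂ F : Type*} [Fintype V₁] [Fintype V₂]
    [Field F]
    (G₁ : SimpleGraph V₁) (G₂ : SimpleGraph V₂)
    (h₁ : G₁.IsTree) (h₂ : G₂.IsTree)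
    (hcard : Fintype.card V₁ = Fintype.card V₂) :
    ∃ φ : ((V₁ → F) × (G₁.edgeSet → F)) ≃ₗ[F] ((V₂ → F) × (G₂.edgeSet → F)),
      (∀ a b, φ (nmul G₁ a b) = nmul G₂ (φ a) (φ b)) ∧
      (∀ u : V₁ → F, ∃ u' : V₂ → F, φ (u, 0) = (u', 0)) ∧
      (∀ u' : V₂ → F, ∃ u : V₁ → F, φ (u, 0) = (u', 0)) ∧
      (∀ z : G₁.edgeSet → F, ∃ z' : G₂.edgeSet → F, φ (0, z) = (0, z')) ∧
      (∀ z' : G₂.edgeSet → F, ∃ z : G₁.edgeSet → F, φ (0, z) = (0, z')) := by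
  have hedges : Nat.card G₁.edgeSet = Nat.card G₂.edgeSet := by
    have hcard₁ := (SimpleGraph.isTree_iff_connected_and_card.mp h₁).2
    have hcard₂ := (SimpleGraph.isTree_iff_connected_and_card.mp h₂).2
    rw [Nat.card_eq_fintype_card (α := V₁)] at hcard₁
    rw [Nat.card_eq_fintype_card (α := V₂)] at hcard₂
    omega
  obtain ⟨σ⟩ := Finite.card_eq.mp hedges
  set A := h₁.vertexEquivOfEdgeEquiv (F := F) h₂ h₁.connected.nonempty.some
    h₂.connected.nonempty.some σ
  set B := LinearEquiv.funCongrLeft F F σ.symm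
  refine ⟨A.prodCongr B, SimpleGraph.prodCongr_funCongrLeft_map_nmul A σ
      (h₁.edgeValMap_vertexEquivOfEdgeEquiv h₂ _ _ σ), fun u => ⟨A u, by simp⟩,
    fun u' => ⟨A.symm u', by simp⟩, fun z => ⟨B z, by simp⟩, fun z' => ⟨B.symm z', by simp⟩⟩

theorem trees_same_order_have_isomorphic_normal_algebras
    {V₁ V₂ F : Type*} [Fintype V₁] [Fintype V₂] [DecidableEq V₁] [DecidableEq V₂]
    [Field F] (hchar2 : ringChar F ≠ 2)
    (G₁ : SimpleGraph V₁) (G₂ : SimpleGraph V₂)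
    (h₁ : G₁.IsTree) (h₂ : G₂.IsTree)
    (hcard : Fintype.card V₁ = Fintype.card V₂) :
    ∃ φ : ((V₁ → F) × (G₁.edgeSet → F)) ≃ₗ[F] ((V₂ → F) × (G₂.edgeSet → F)),
      (∀ a b, φ (nmul G₁ a b) = nmul G₂ (φ a) (φ b)) ∧
      (∀ u : V₁ → F, ∃ u' : V₂ → F, φ (u, 0) = (u', 0)) ∧
      (∀ u' : V₂ → F, ∃ u : V₁ → F, φ (u, 0) = (u', 0)) ∧
      (∀ z : G₁.edgeSet → F, ∃ z' : G₂.edgeSet → F, φ (0, z) = (0, z')) ∧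
      (∀ z' : G₂.edgeSet → F, ∃ z : G₁.edgeSet → F, φ (0, z) = (0, z')) :=
  trees_same_order_have_isomorphic_normal_algebras_general G₁ G₂ h₁ h₂ hcard
end

section
/- Let F be a field of characteristic 0 and let G be a connected finite simple graph of order p and size q such that every pair of two distinct edges of G is the support of u² for some u : V(G) → F, but G is not edge-square over F. Then q = p or q = p + 1, and in the case q = p the graph G is a cycle of even length. -/
/-- Every pair of distinct edges of `G` is the support of a square `u²`. -/
def PairSquare {V : Type*} (F : Type*) [Field F] (G : SimpleGraph V) : Prop :=
  ∀ e ∈ G.edgeSet, ∀ f ∈ G.edgeSet, e ≠ f → ∃ u : V → F,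
    {g : Sym2 V | g ∈ G.edgeSet ∧ edgeVal u g ≠ 0} = {e, f}

open Finset Matrix Module

@[simp]
theorem edgeVal_mk {V F : Type*} [Field F] (u : V → F) (x y : V) :
    edgeVal u s(x, y) = u x + u y :=
  rfl

theorem edgeVal_ne_zero_iff {V F : Type*} [Field F] {G : SimpleGraph V} {u : V → F}
    {S : Set (Sym2 V)} (hu : {g | g ∈ G.edgeSet ∧ edgeVal u g ≠ 0} = S) {g : Sym2 V}
    (hg : g ∈ G.edgeSet) :
    edgeVal u g ≠ 0 ↔ g ∈ S := by
  rw [← hu, Set.mem_ofPred_eq, and_iff_right hg]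

theorem Matrix.exists_mulVec_eq_zero_of_rank_lt {m n K : Type*} [Fintype n] [Field K]
    (M : Matrix m n K) (h : M.rank < Fintype.card n) : ∃ v ≠ 0, M *ᵥ v = 0 := by
  have hker : LinearMap.ker M.mulVecLin ≠ ⊥ := by
    intro hbot
    have := LinearMap.finrank_range_add_finrank_ker M.mulVecLin
    rw [hbot, finrank_bot, finrank_fintype_fun_eq_card] at this
    exact h.ne this
  obtain ⟨v, hv, hv0⟩ := Submodule.exists_mem_ne_zero_of_ne_bot hker
  exact ⟨v, hv0, hv⟩

namespace SimpleGraph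

variable {V : Type*} {G : SimpleGraph V}

theorem Walk.apply_eq_neg_one_pow_length_mul {R : Type*} [CommRing R] {u : V → R}
    (hu : ∀ ⦃x y⦄, G.Adj x y → u x + u y = 0) {a b : V} (p : G.Walk a b) :
    u b = (-1) ^ p.length * u a := by
  induction p with
  | nil => simp
  | @cons a x b h p ih =>
    rw [ih, length_cons, pow_succ, eq_neg_of_add_eq_zero_right (hu h)]
    ring

theorem Connected.even_length_of_adj_add_eq_zero {R : Type*} [CommRing R] [IsDomain R]
    (hconn : G.Connected) (hR : (-1 : R) ≠ 1) {u : V → R}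
    (hu : ∀ ⦃x y⦄, G.Adj x y → u x + u y = 0) (hu0 : u ≠ 0) {v : V} (p : G.Walk v v) :
    Even p.length := by
  obtain ⟨x, hx⟩ := Function.ne_iff.1 hu0
  have hv : u v ≠ 0 := by
    rw [(hconn x v).some.apply_eq_neg_one_pow_length_mul hu]
    exact mul_ne_zero (pow_ne_zero _ (neg_ne_zero.2 one_ne_zero)) hx
  have h := p.apply_eq_neg_one_pow_length_mul hu
  rw [eq_comm, mul_left_eq_self₀, or_iff_left hv] at h
  exact (neg_one_pow_eq_one_iff_even hR).1 h

variable [Fintype V] [DecidableRel G.Adj]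

theorem card_le_card_edgeFinset_of_two_le_degree (h : ∀ v, 2 ≤ G.degree v) :
    Fintype.card V ≤ #G.edgeFinset := by
  have := Finset.sum_le_sum fun v (_ : v ∈ univ) => h v
  rw [sum_degrees_eq_twice_card_edges, sum_const, card_univ, smul_eq_mul] at this
  omega

theorem degree_eq_two_of_card_edgeFinset_eq (h : ∀ v, 2 ≤ G.degree v)
    (hq : #G.edgeFinset = Fintype.card V) (v : V) : G.degree v = 2 := by
  have hsum : ∑ _v : V, 2 = ∑ v, G.degree v := by
    rw [sum_degrees_eq_twice_card_edges, sum_const, card_univ, smul_eq_mul, hq, mul_comm]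
  exact ((sum_eq_sum_iff_of_le fun v _ => h v).1 hsum v (mem_univ v)).symm

theorem Connected.exists_isCycle_of_degree_eq_two (hconn : G.Connected)
    (h : ∀ v, G.degree v = 2) :
    ∃ (v : V) (w : G.Walk v v), w.IsCycle ∧ (∀ x, x ∈ w.support) ∧
      ∀ e ∈ G.edgeSet, e ∈ w.edges := by
  have hcyc : G.IsCycles := fun v _ => by
    rw [← coe_neighborFinset, Set.ncard_coe_finset, card_neighborFinset_eq_degree, h v]
  obtain ⟨v⟩ := hconn.nonempty
  have hv : (G.neighborSet v).Nonempty := by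
    rw [← coe_neighborFinset, coe_nonempty, ← card_pos, card_neighborFinset_eq_degree, h v]
    norm_num
  obtain ⟨w, hw, hverts⟩ := hcyc.exists_cycle_toSubgraph_verts_eq_connectedComponentSupp
    (c := G.connectedComponentMk v) rfl hv
  have hsupp : ∀ x, x ∈ w.support := fun x => by
    rw [← Walk.mem_verts_toSubgraph, hverts]
    exact ConnectedComponent.eq.2 (hconn x v)
  refine ⟨v, w, hw, hsupp, fun e he => ?_⟩
  induction e using Sym2.ind with
  | _ x y =>
    rw [← Walk.mem_edges_toSubgraph, Subgraph.mem_edgeSet,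
      hw.adj_toSubgraph_iff_of_isCycles hcyc ((w.mem_verts_toSubgraph).2 (hsupp x))]
    exact he

end SimpleGraph

section EdgeIncMatrix

variable {V : Type*} [Fintype V] [DecidableEq V] {F : Type*} [Field F] {G : SimpleGraph V}

variable (F G) in
/-- The matrix of `u ↦ (λ_e(u))_e`, so that a vector `c` with `Aᵀ *ᵥ c = 0` is a linear
relation `∑ c_e λ_e = 0`. -/
def edgeIncMatrix : Matrix G.edgeSet V F :=
  Matrix.of fun e v => if v ∈ (e : Sym2 V) then 1 else 0

theorem edgeIncMatrix_mulVec (u : V → F) (e : G.edgeSet) :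
    (edgeIncMatrix F G *ᵥ u) e = edgeVal u e := by
  obtain ⟨e, he⟩ := e
  induction e using Sym2.ind with
  | _ x y =>
    have hxy : x ≠ y := G.ne_of_adj he
    rw [mulVec, dotProduct, Fintype.sum_eq_add x y hxy (by simp_all [edgeIncMatrix])]
    simp [edgeIncMatrix, hxy.symm]

theorem adj_add_eq_zero_of_mulVec_eq_zero {u : V → F} (hu : edgeIncMatrix F G *ᵥ u = 0)
    ⦃x y : V⦄ (h : G.Adj x y) : u x + u y = 0 := by
  simpa [edgeIncMatrix_mulVec] using congrFun hu ⟨s(x, y), h⟩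

variable [DecidableRel G.Adj]

theorem sum_mul_edgeVal_eq_zero {c : G.edgeSet → F} (hc : (edgeIncMatrix F G)ᵀ *ᵥ c = 0)
    (u : V → F) : ∑ e, c e * edgeVal u e = 0 := by
  calc ∑ e, c e * edgeVal u e = c ⬝ᵥ (edgeIncMatrix F G *ᵥ u) := by
        simp only [dotProduct, edgeIncMatrix_mulVec]
    _ = (c ᵥ* edgeIncMatrix F G) ⬝ᵥ u := dotProduct_mulVec _ _ _
    _ = 0 := by rw [← mulVec_transpose, hc, zero_dotProduct]

theorem rank_edgeIncMatrix_lt_of_not_edgeSquare (h : ¬ EdgeSquare F G) :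
    (edgeIncMatrix F G).rank < Fintype.card G.edgeSet := by
  refine lt_of_le_of_ne (edgeIncMatrix F G).rank_le_card_height fun hrank => h fun e he => ?_
  have htop : LinearMap.range (edgeIncMatrix F G).mulVecLin = ⊤ :=
    Submodule.eq_top_of_finrank_eq (by rw [finrank_fintype_fun_eq_card]; exact hrank)
  obtain ⟨u, hu⟩ : Pi.single ⟨e, he⟩ 1 ∈ LinearMap.range (edgeIncMatrix F G).mulVecLin :=
    htop ▸ Submodule.mem_top
  refine ⟨u, Set.ext fun f => ?_⟩
  by_cases hf : f ∈ G.edgeSet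
  · have := congrFun hu ⟨f, hf⟩
    simp only [mulVecLin_apply, edgeIncMatrix_mulVec] at this
    simp [hf, this, Pi.single_apply]
  · simp only [Set.mem_ofPred_eq, hf, false_and, Set.mem_singleton_iff, false_iff]
    rintro rfl
    exact hf he

theorem PairSquare.eq_zero_of_apply_eq_zero (h : PairSquare F G) {c : G.edgeSet → F}
    (hc : (edgeIncMatrix F G)ᵀ *ᵥ c = 0) {e : G.edgeSet} (he : c e = 0) : c = 0 := by
  funext f
  by_contra hf
  have hef : (e : Sym2 V) ≠ f := fun h => hf (Subtype.ext h ▸ he)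
  obtain ⟨u, hu⟩ := h e e.2 f f.2 hef
  have hsum : ∑ g, c g * edgeVal u g = c f * edgeVal u f := by
    refine Finset.sum_eq_single f (fun g _ hgf => ?_) (by simp)
    by_cases hge : g = e
    · rw [hge, he, zero_mul]
    · have : edgeVal u g = 0 := by
        by_contra hg
        rcases (edgeVal_ne_zero_iff hu g.2).1 hg with hg | hg
        exacts [hge (Subtype.ext hg), hgf (Subtype.ext hg)]
      rw [this, mul_zero]
  exact mul_ne_zero hf ((edgeVal_ne_zero_iff hu f.2).2 (Or.inr rfl)) <|
    hsum ▸ sum_mul_edgeVal_eq_zero hc u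

theorem degree_ne_one_of_mulVec_eq_zero {c : G.edgeSet → F}
    (hc : (edgeIncMatrix F G)ᵀ *ᵥ c = 0) (hc0 : ∀ e, c e ≠ 0) (v : V) : G.degree v ≠ 1 := by
  intro hv
  obtain ⟨w, hvw, huniq⟩ := G.degree_eq_one_iff_existsUnique_adj.1 hv
  have hsum := congrFun hc v
  rw [mulVec, dotProduct, Finset.sum_eq_single ⟨s(v, w), hvw⟩] at hsum
  · simp only [edgeIncMatrix, transpose_apply, of_apply, Sym2.mem_iff, true_or, ↓reduceIte,
      one_mul, Pi.zero_apply] at hsum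
    exact hc0 _ hsum
  · rintro ⟨f, hf⟩ _ hne
    simp only [transpose_apply, edgeIncMatrix, of_apply, ite_mul, one_mul, zero_mul,
      ite_eq_right_iff]
    intro hvf
    obtain ⟨x, rfl⟩ := Sym2.mem_iff_exists.1 hvf
    obtain rfl := huniq x hf
    exact absurd rfl hne
  · simp

theorem PairSquare.finrank_ker_transpose_le_one [Nonempty G.edgeSet] (h : PairSquare F G) :
    finrank F (LinearMap.ker (edgeIncMatrix F G)ᵀ.mulVecLin) ≤ 1 := by
  obtain ⟨e⟩ := ‹Nonempty G.edgeSet›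
  refine (LinearMap.finrank_le_finrank_of_injective
    (f := (LinearMap.proj e).comp (LinearMap.ker (edgeIncMatrix F G)ᵀ.mulVecLin).subtype)
    ?_).trans (finrank_self F).le
  rw [injective_iff_map_eq_zero]
  rintro ⟨c, hc⟩ hce
  exact Subtype.ext (h.eq_zero_of_apply_eq_zero hc hce)

theorem PairSquare.rank_edgeIncMatrix_add_one (h : PairSquare F G) (hn : ¬ EdgeSquare F G) :
    (edgeIncMatrix F G).rank + 1 = Fintype.card G.edgeSet := by
  have hlt := rank_edgeIncMatrix_lt_of_not_edgeSquare hn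
  have : Nonempty G.edgeSet := Fintype.card_pos_iff.1 (by omega)
  have hsum := LinearMap.finrank_range_add_finrank_ker (edgeIncMatrix F G)ᵀ.mulVecLin
  rw [finrank_fintype_fun_eq_card, ← Matrix.rank, rank_transpose] at hsum
  have := h.finrank_ker_transpose_le_one
  omega

theorem PairSquare.two_le_degree (h : PairSquare F G) (hconn : G.Connected) {c : G.edgeSet → F}
    (hc : (edgeIncMatrix F G)ᵀ *ᵥ c = 0) (hc0 : c ≠ 0) (v : V) : 2 ≤ G.degree v := by
  obtain ⟨⟨e, he⟩, -⟩ := Function.ne_iff.1 hc0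
  have : Nontrivial V := by
    induction e using Sym2.ind with
    | _ x y => exact (G.mem_edgeSet.1 he).nontrivial
  have hpos := hconn.preconnected.degree_pos_of_nontrivial v
  have hne := degree_ne_one_of_mulVec_eq_zero hc
    (fun e he => hc0 (h.eq_zero_of_apply_eq_zero hc he)) v
  omega

end EdgeIncMatrix

theorem pair_square_classification
    {V F : Type*} [Fintype V] [DecidableEq V] [Field F] [CharZero F]
    (G : SimpleGraph V) [DecidableRel G.Adj]
    (hconn : G.Connected) (hps : PairSquare F G) (hnes : ¬ EdgeSquare F G) :
    (G.edgeFinset.card = Fintype.card V ∨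
        G.edgeFinset.card = Fintype.card V + 1) ∧
      (G.edgeFinset.card = Fintype.card V →
        ∃ (v : V) (w : G.Walk v v), w.IsCycle ∧ Even w.length ∧
          (∀ x : V, x ∈ w.support) ∧ (∀ e ∈ G.edgeSet, e ∈ w.edges)) := by
  set A := edgeIncMatrix F G
  have hrank : A.rank + 1 = Fintype.card G.edgeSet := hps.rank_edgeIncMatrix_add_one hnes
  have hrank_le : A.rank ≤ Fintype.card V := A.rank_le_card_width
  obtain ⟨c, hc0, hc⟩ := Aᵀ.exists_mulVec_eq_zero_of_rank_lt (by rw [rank_transpose]; omega)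
  have hdeg : ∀ v, 2 ≤ G.degree v := hps.two_le_degree hconn hc hc0
  have hpq := G.card_le_card_edgeFinset_of_two_le_degree hdeg
  rw [G.edgeFinset_card] at hpq ⊢
  refine ⟨by omega, fun hqp => ?_⟩
  obtain ⟨u, hu0, hu⟩ := A.exists_mulVec_eq_zero_of_rank_lt (by omega)
  obtain ⟨v, w, hw, hsupp, hedges⟩ := hconn.exists_isCycle_of_degree_eq_two
    (G.degree_eq_two_of_card_edgeFinset_eq hdeg (by rw [G.edgeFinset_card, hqp]))
  exact ⟨v, w, hw, hconn.even_length_of_adj_add_eq_zero (by norm_num)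
    (adj_add_eq_zero_of_mulVec_eq_zero hu) hu0 w, hsupp, hedges⟩
end
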